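/- Let G = (V, E, w) be an edge-weighted graph with positive integer edge weights, let ε and δ be reals with 0 < ε ≤ δ ≤ 1/100, and let H be a (1+δ)-spanner of G. Let F_old ⊆ E(H) and F_new ⊆ E, and suppose that for every edge (u,v) ∈ F_old there exist vertices x, y ∈ V and a walk γ from x to y all of whose edges lie in F_new, such that w(γ) ≥ w(u,v)/(3(1+ε)) and dist_G(u,x) + w(γ) + dist_G(y,v) ≤ (1+ε)·w(u,v). Then the subgraph H₁ of G with edge set F_new ∪ (E(H) ∖ F_old) satisfies dist_{H₁}(s,t) ≤ (1 + 11δ)·dist_G(s,t) for all vertices s, t ∈ V. -/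

import Mathlib

open scoped BigOperators

namespace Paper

variable {V : Type*}

/-- The weight of a walk: the sum of its edge weights, with multiplicity. -/
noncomputable def wWalk (w : V → V → ℝ) {G : SimpleGraph V} {u v : V} (p : G.Walk u v) : ℝ :=
  (p.darts.map fun d => w d.toProd.1 d.toProd.2).sum

/-- The distance between two vertices: the infimum of the weights of walks
between them, `⊤` if there is none. -/
noncomputable def gdist (G : SimpleGraph V) (w : V → V → ℝ) (u v : V) : EReal :=
  ⨅ p : G.Walk u v, (wWalk w p : EReal)

/-- `H` is a `t`-spanner of `G` with respect to the weights `w`. -/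
def IsSpanner (G : SimpleGraph V) (w : V → V → ℝ) (H : SimpleGraph V) (t : ℝ) : Prop :=
  H ≤ G ∧ ∀ u v : V, gdist H w u v ≤ (t : EReal) * gdist G w u v

/-- The total weight of the edges of a graph. -/
noncomputable def wGraph (G : SimpleGraph V) (w : V → V → ℝ)
    (hw : ∀ a b, w a b = w b a) : ℝ :=
  ∑ᶠ e ∈ G.edgeSet, Sym2.lift ⟨w, hw⟩ e

/-!
Induction on the integer distance `n = dist_G(s, t)`. A lightest `H`-walk `P` from `s` to `t`
weighs at most `(1 + δ) n`. An edge of `P` that survives in `H₁` is kept; a removed edge `ab` is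
replaced by a lightest `a`–`x` walk, the walk `γ` and a lightest `y`–`b` walk. As `γ` carries at
least a third of `w(a, b)`, the two connecting distances are below `n`, so by induction they are
covered in `H₁` with stretch `1 + 11δ`, and the replacement costs at most
`(1 + 11δ)(1 + ε) w(a, b) - 11δ w(γ) ≤ (1 + 11δ) / (1 + δ) · w(a, b)`. Summing along `P` gives
`(1 + 11δ) n`.
-/

open SimpleGraph

section Walks

variable {G K : SimpleGraph V} {w : V → V → ℝ}

@[simp]
lemma wWalk_nil {u : V} : wWalk w (Walk.nil : G.Walk u u) = 0 := by
  simp [wWalk]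

@[simp]
lemma wWalk_cons {u v x : V} (h : G.Adj u v) (p : G.Walk v x) :
    wWalk w (Walk.cons h p) = w u v + wWalk w p := by
  simp [wWalk]

@[simp]
lemma wWalk_append {u v x : V} (p : G.Walk u v) (q : G.Walk v x) :
    wWalk w (p.append q) = wWalk w p + wWalk w q := by
  simp [wWalk, Walk.darts_append]

@[simp]
lemma wWalk_transfer {u v : V} (p : G.Walk u v) (hp : ∀ e ∈ p.edges, e ∈ K.edgeSet) :
    wWalk w (p.transfer K hp) = wWalk w p := by
  induction p with
  | nil => rfl
  | cons h p ih => exact (wWalk_cons _ _).trans (by rw [ih, wWalk_cons])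

lemma wWalk_nonneg (hw : ∀ a b, G.Adj a b → 0 ≤ w a b) {u v : V} (p : G.Walk u v) :
    0 ≤ wWalk w p := by
  induction p with
  | nil => simp
  | cons h p ih => rw [wWalk_cons]; exact add_nonneg (hw _ _ h) ih

lemma le_wWalk_of_mem_darts (hw : ∀ a b, G.Adj a b → 0 ≤ w a b) {u v : V} (p : G.Walk u v)
    {d : G.Dart} (hd : d ∈ p.darts) : w d.toProd.1 d.toProd.2 ≤ wWalk w p := by
  refine List.single_le_sum ?_ _ (List.mem_map_of_mem hd)
  simp only [List.mem_map]
  rintro _ ⟨d', _, rfl⟩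
  exact hw _ _ d'.adj

lemma exists_wWalk_eq_natCast (hw : ∀ a b, G.Adj a b → ∃ m : ℕ, w a b = m) {u v : V}
    (p : G.Walk u v) : ∃ n : ℕ, wWalk w p = n := by
  induction p with
  | nil => exact ⟨0, by simp⟩
  | cons h p ih =>
    obtain ⟨k, hk⟩ := ih
    obtain ⟨m, hm⟩ := hw _ _ h
    exact ⟨m + k, by rw [wWalk_cons, hk, hm]; push_cast; ring⟩

lemma exists_walk_le_mul_wWalk (c : ℝ) {a b : V} (P : G.Walk a b)
    (hd : ∀ d ∈ P.darts, ∃ Q : K.Walk d.toProd.1 d.toProd.2,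
      wWalk w Q ≤ c * w d.toProd.1 d.toProd.2) :
    ∃ Q : K.Walk a b, wWalk w Q ≤ c * wWalk w P := by
  induction P with
  | nil => exact ⟨Walk.nil, by simp⟩
  | @cons a a' b h P ih =>
    obtain ⟨Q₁, hQ₁⟩ := hd ⟨(a, a'), h⟩ (by simp)
    obtain ⟨Q₂, hQ₂⟩ := ih fun d hdm => hd d (by simp [hdm])
    refine ⟨Q₁.append Q₂, ?_⟩
    rw [wWalk_append, wWalk_cons, mul_add]
    exact add_le_add hQ₁ hQ₂

end Walks

section Distances

variable {G : SimpleGraph V} {w : V → V → ℝ}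

lemma gdist_le_wWalk {u v : V} (p : G.Walk u v) : gdist G w u v ≤ wWalk w p :=
  iInf_le _ p

lemma gdist_nonneg (hw : ∀ a b, G.Adj a b → 0 ≤ w a b) (u v : V) : 0 ≤ gdist G w u v :=
  le_iInf fun p => EReal.coe_nonneg.mpr (wWalk_nonneg hw p)

lemma gdist_eq_top_of_isEmpty {u v : V} [IsEmpty (G.Walk u v)] : gdist G w u v = ⊤ :=
  iInf_of_empty _

lemma nonempty_walk_of_gdist_ne_top {u v : V} (h : gdist G w u v ≠ ⊤) :
    Nonempty (G.Walk u v) := by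
  by_contra hne
  rw [not_nonempty_iff] at hne
  exact h gdist_eq_top_of_isEmpty

lemma exists_walk_gdist_eq_natCast (hw : ∀ a b, G.Adj a b → ∃ m : ℕ, w a b = m) {u v : V}
    (h : gdist G w u v ≠ ⊤) :
    ∃ (n : ℕ) (p : G.Walk u v), wWalk w p = n ∧ gdist G w u v = ((n : ℝ) : EReal) := by
  classical
  obtain ⟨p₀⟩ := nonempty_walk_of_gdist_ne_top h
  have hex : ∃ n : ℕ, ∃ p : G.Walk u v, wWalk w p = n :=
    (exists_wWalk_eq_natCast hw p₀).imp fun _ hn => ⟨p₀, hn⟩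
  obtain ⟨p, hp⟩ := Nat.find_spec hex
  refine ⟨Nat.find hex, p, hp, le_antisymm (hp ▸ gdist_le_wWalk p) (le_iInf fun q => ?_)⟩
  obtain ⟨m, hm⟩ := exists_wWalk_eq_natCast hw q
  rw [hm, EReal.coe_le_coe_iff]
  exact_mod_cast Nat.find_min' hex ⟨q, hm⟩

lemma exists_natCast_of_gdist_add_add_le (hw : ∀ a b, G.Adj a b → ∃ m : ℕ, w a b = m)
    {a x y b : V} {r s : ℝ} (h : gdist G w a x + r + gdist G w y b ≤ s) :
    ∃ n₁ n₂ : ℕ, gdist G w a x = ((n₁ : ℝ) : EReal) ∧ gdist G w y b = ((n₂ : ℝ) : EReal) ∧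
      n₁ + r + n₂ ≤ s := by
  have hw₀ : ∀ a b, G.Adj a b → 0 ≤ w a b := fun a b hab => by
    obtain ⟨m, hm⟩ := hw a b hab
    exact hm ▸ m.cast_nonneg
  have hax := gdist_nonneg hw₀ a x
  have hyb := gdist_nonneg hw₀ y b
  have hax_top : gdist G w a x ≠ ⊤ := by
    rintro hax_eq
    rw [hax_eq, EReal.top_add_coe, EReal.top_add_of_ne_bot (ne_bot_of_le_ne_bot (by simp) hyb)] at h
    exact (EReal.coe_lt_top s).not_ge h
  have hyb_top : gdist G w y b ≠ ⊤ := by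
    rintro hyb_eq
    obtain ⟨n₁, -, -, hn₁⟩ := exists_walk_gdist_eq_natCast hw hax_top
    rw [hyb_eq, hn₁, ← EReal.coe_add, EReal.coe_add_top] at h
    exact (EReal.coe_lt_top s).not_ge h
  obtain ⟨n₁, -, -, hn₁⟩ := exists_walk_gdist_eq_natCast hw hax_top
  obtain ⟨n₂, -, -, hn₂⟩ := exists_walk_gdist_eq_natCast hw hyb_top
  refine ⟨n₁, n₂, hn₁, hn₂, ?_⟩
  rw [hn₁, hn₂] at h
  exact_mod_cast h

end Distances

section Arithmetic

variable {ε δ : ℝ}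

lemma detour_coeff_le (hε : 0 ≤ ε) (hεδ : ε ≤ δ) (hδ : δ ≤ 1 / 100) :
    3 * (1 + ε) ^ 2 * (1 + δ) * (1 + 11 * δ) - 11 * δ * (1 + δ) ≤ 3 * (1 + ε) * (1 + 11 * δ) := by
  have hδ0 : 0 ≤ δ := hε.trans hεδ
  nlinarith [mul_nonneg (mul_nonneg hε hδ0) (sub_nonneg.2 hδ), mul_nonneg hδ0 hδ0,
    mul_nonneg (sub_nonneg.2 hεδ) hδ0]

lemma detour_weight_le {W g d₁ d₂ : ℝ} (hε : 0 ≤ ε) (hεδ : ε ≤ δ) (hδ : δ ≤ 1 / 100)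
    (hW : 0 ≤ W) (hg : W ≤ 3 * (1 + ε) * g) (hsum : d₁ + g + d₂ ≤ (1 + ε) * W) :
    (1 + δ) * ((1 + 11 * δ) * (d₁ + d₂) + g) ≤ (1 + 11 * δ) * W := by
  have hδ0 : 0 ≤ δ := hε.trans hεδ
  have h3 : 0 < 3 * (1 + ε) := by positivity
  have hcoeff := detour_coeff_le hε hεδ hδ
  refine le_of_mul_le_mul_left ?_ h3
  nlinarith [mul_le_mul_of_nonneg_left hsum
      (by positivity : 0 ≤ 3 * (1 + ε) * (1 + δ) * (1 + 11 * δ)),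
    mul_le_mul_of_nonneg_left hg (by positivity : 0 ≤ 11 * δ * (1 + δ)),
    mul_le_mul_of_nonneg_right hcoeff hW]

lemma lt_of_detour {W g d n : ℝ} (hε : 0 ≤ ε) (hεδ : ε ≤ δ) (hδ : δ ≤ 1 / 100)
    (hW : 0 < W) (hg : W ≤ 3 * (1 + ε) * g) (hsum : d + g ≤ (1 + ε) * W)
    (hn : W ≤ (1 + δ) * n) : d < n := by
  have hε1 : ε ≤ 1 / 100 := hεδ.trans hδ
  have hn0 : 0 < n := by nlinarith
  have h3 : 3 * (1 + ε) * d ≤ (3 * (1 + ε) ^ 2 - 1) * W := by nlinarith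
  have hcoeff : 3 * (1 + ε) ^ 2 - 1 ≤ 21 / 10 := by nlinarith
  nlinarith [mul_le_mul_of_nonneg_right hcoeff hW.le, mul_le_mul_of_nonneg_right hδ hn0.le]

end Arithmetic

def HasDetour (G K : SimpleGraph V) (w : V → V → ℝ) (ε : ℝ) (a b : V) : Prop :=
  ∃ (x y : V) (γ : K.Walk x y), w a b ≤ 3 * (1 + ε) * wWalk w γ ∧
    gdist G w a x + (wWalk w γ : EReal) + gdist G w y b ≤ (((1 + ε) * w a b : ℝ) : EReal)

section Stretch

variable {G H K : SimpleGraph V} {w : V → V → ℝ} {ε δ : ℝ}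

lemma gdist_le_mul_gdist_of_forall_natCast
    (hnat : ∀ a b, G.Adj a b → ∃ m : ℕ, w a b = m) {C : ℝ} (hC : 0 < C)
    (h : ∀ n : ℕ, ∀ u v, gdist G w u v = ((n : ℝ) : EReal) →
      ∃ Q : K.Walk u v, wWalk w Q ≤ C * n)
    (s t : V) : gdist K w s t ≤ (C : EReal) * gdist G w s t := by
  by_cases hst : gdist G w s t = ⊤
  · rw [hst, EReal.coe_mul_top_of_pos hC]
    exact le_top
  obtain ⟨n, -, -, hn⟩ := exists_walk_gdist_eq_natCast hnat hst
  obtain ⟨Q, hQ⟩ := h n s t hn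
  rw [hn, ← EReal.coe_mul]
  exact (gdist_le_wWalk Q).trans (EReal.coe_le_coe_iff.mpr hQ)

variable (hint : ∀ u v : V, G.Adj u v → ∃ m : ℕ, 1 ≤ m ∧ w u v = m)
  (hε : 0 ≤ ε) (hεδ : ε ≤ δ) (hδ : δ ≤ 1 / 100)
include hint hε hεδ hδ

/-- Since a detour carries at least a third of the weight of its edge, both connecting distances
are smaller than `n`, so the induction hypothesis applies to them. -/
lemma exists_walk_le_of_adj_or_hasDetour {n : ℕ}
    (IH : ∀ m < n, ∀ u v, gdist G w u v = ((m : ℝ) : EReal) →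
      ∃ Q : K.Walk u v, wWalk w Q ≤ (1 + 11 * δ) * m)
    {a b : V} (hab : G.Adj a b) (hK : K.Adj a b ∨ HasDetour G K w ε a b)
    (hn : w a b ≤ (1 + δ) * n) :
    ∃ Q : K.Walk a b, wWalk w Q ≤ (1 + 11 * δ) / (1 + δ) * w a b := by
  have hδ0 : 0 ≤ δ := hε.trans hεδ
  obtain ⟨m, hm1, hm⟩ := hint a b hab
  have hW : (1 : ℝ) ≤ w a b := hm ▸ Nat.one_le_cast.mpr hm1
  simp_rw [div_mul_eq_mul_div, le_div_iff₀ (by linarith : (0 : ℝ) < 1 + δ), mul_comm _ (1 + δ)]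
  rcases hK with hK | ⟨x, y, γ, hγ, hsum⟩
  · refine ⟨Walk.cons hK Walk.nil, ?_⟩
    rw [wWalk_cons, wWalk_nil, add_zero]
    nlinarith
  obtain ⟨n₁, n₂, hn₁, hn₂, hsum⟩ :=
    exists_natCast_of_gdist_add_add_le (fun a b h => (hint a b h).imp fun _ => And.right) hsum
  have hlt : ∀ k : ℕ, (k : ℝ) + wWalk w γ ≤ (1 + ε) * w a b → k < n := fun k hk => by
    exact_mod_cast lt_of_detour hε hεδ hδ (by linarith) hγ hk hn
  obtain ⟨Q₁, hQ₁⟩ := IH n₁ (hlt n₁ (by linarith [n₂.cast_nonneg (α := ℝ)])) a x hn₁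
  obtain ⟨Q₂, hQ₂⟩ := IH n₂ (hlt n₂ (by linarith [n₁.cast_nonneg (α := ℝ)])) y b hn₂
  refine ⟨Q₁.append (γ.append Q₂), ?_⟩
  rw [wWalk_append, wWalk_append]
  nlinarith [detour_weight_le hε hεδ hδ (by linarith) hγ hsum]

lemma exists_walk_le_of_gdist_eq (hH : IsSpanner G w H (1 + δ))
    (hK : ∀ a b, H.Adj a b → K.Adj a b ∨ HasDetour G K w ε a b) (n : ℕ) :
    ∀ u v, gdist G w u v = ((n : ℝ) : EReal) → ∃ Q : K.Walk u v, wWalk w Q ≤ (1 + 11 * δ) * n := by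
  induction n using Nat.strong_induction_on with
  | _ n IH =>
  intro u v hn
  have hδ0 : 0 ≤ δ := hε.trans hεδ
  have hHn : gdist H w u v ≤ (((1 + δ) * n : ℝ) : EReal) := by
    simpa only [hn, ← EReal.coe_mul] using hH.2 u v
  obtain ⟨m, P, hPm, hPd⟩ := exists_walk_gdist_eq_natCast
    (fun a b h => (hint a b (hH.1 h)).imp fun _ => And.right)
    (ne_top_of_le_ne_top (EReal.coe_ne_top _) hHn)
  have hm : (m : ℝ) ≤ (1 + δ) * n := by
    rw [hPd] at hHn
    exact_mod_cast hHn
  have hposH : ∀ a b, H.Adj a b → 0 ≤ w a b := fun a b h => by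
    obtain ⟨k, -, hk⟩ := hint a b (hH.1 h)
    exact hk ▸ k.cast_nonneg
  obtain ⟨Q, hQ⟩ := exists_walk_le_mul_wWalk _ P fun d hd =>
    exists_walk_le_of_adj_or_hasDetour hint hε hεδ hδ IH (hH.1 d.adj) (hK _ _ d.adj)
      ((le_wWalk_of_mem_darts hposH P hd).trans (hPm ▸ hm))
  refine ⟨Q, hQ.trans ?_⟩
  calc (1 + 11 * δ) / (1 + δ) * wWalk w P
      ≤ (1 + 11 * δ) / (1 + δ) * ((1 + δ) * n) := by rw [hPm]; gcongr
    _ = (1 + 11 * δ) * n := by field_simp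

theorem gdist_le_of_forall_adj_or_hasDetour (hH : IsSpanner G w H (1 + δ))
    (hK : ∀ a b, H.Adj a b → K.Adj a b ∨ HasDetour G K w ε a b) (s t : V) :
    gdist K w s t ≤ ((1 + 11 * δ : ℝ) : EReal) * gdist G w s t :=
  gdist_le_mul_gdist_of_forall_natCast (fun a b h => (hint a b h).imp fun _ => And.right)
    (by linarith) (fun n => exists_walk_le_of_gdist_eq hint hε hεδ hδ hH hK n) s t

end Stretch

theorem statement5_general (G : SimpleGraph V) (w : V → V → ℝ)
    (hint : ∀ u v : V, G.Adj u v → ∃ m : ℕ, 1 ≤ m ∧ w u v = m)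
    (ε δ : ℝ) (hε0 : 0 < ε) (hεδ : ε ≤ δ) (hδ : δ ≤ 1/100)
    (H : SimpleGraph V) (hH : IsSpanner G w H (1 + δ))
    (Fold Fnew : Set (Sym2 V))
    (hrepl : ∀ u v : V, s(u, v) ∈ Fold →
      ∃ (x y : V) (γ : G.Walk x y),
        (∀ e ∈ γ.edges, e ∈ Fnew) ∧
        w u v / (3 * (1 + ε)) ≤ wWalk w γ ∧
        gdist G w u x + (wWalk w γ : EReal) + gdist G w y v ≤ (((1 + ε) * w u v : ℝ) : EReal)) :
    ∀ s t : V,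
      gdist (SimpleGraph.fromEdgeSet (Fnew ∪ (H.edgeSet \ Fold))) w s t
        ≤ ((1 + 11 * δ : ℝ) : EReal) * gdist G w s t := by
  refine gdist_le_of_forall_adj_or_hasDetour hint hε0.le hεδ hδ hH fun a b hab => ?_
  by_cases hab_old : s(a, b) ∈ Fold
  · obtain ⟨x, y, γ, hγ_new, hγ_weight, hγ_dist⟩ := hrepl a b hab_old
    have hγ_edges : ∀ e ∈ γ.edges, e ∈ (fromEdgeSet (Fnew ∪ (H.edgeSet \ Fold))).edgeSet :=
      fun e he => (edgeSet_fromEdgeSet _ ▸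
        ⟨Or.inl (hγ_new e he), G.not_isDiag_of_mem_edgeSet (γ.edges_subset_edgeSet he)⟩)
    refine Or.inr ⟨x, y, γ.transfer _ hγ_edges, ?_, ?_⟩ <;> rw [wWalk_transfer]
    · rwa [div_le_iff₀ (by linarith), mul_comm] at hγ_weight
    · exact hγ_dist
  · exact Or.inl ((fromEdgeSet_adj _).mpr ⟨Or.inr ⟨hab, hab_old⟩, hab.ne⟩)

/-- replacing the pruned set `F_old` by `F_new` in the spanner `H`
keeps the stretch bounded by `1 + 11δ`. -/
theorem statement5 (G : SimpleGraph V) (w : V → V → ℝ)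
    (hw : ∀ a b, w a b = w b a)
    (hint : ∀ u v : V, G.Adj u v → ∃ m : ℕ, 1 ≤ m ∧ w u v = m)
    (ε δ : ℝ) (hε0 : 0 < ε) (hεδ : ε ≤ δ) (hδ : δ ≤ 1/100)
    (H : SimpleGraph V) (hH : IsSpanner G w H (1 + δ))
    (Fold Fnew : Set (Sym2 V)) (hFold : Fold ⊆ H.edgeSet) (hFnew : Fnew ⊆ G.edgeSet)
    (hrepl : ∀ u v : V, s(u, v) ∈ Fold →
      ∃ (x y : V) (γ : G.Walk x y),
        (∀ e ∈ γ.edges, e ∈ Fnew) ∧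
        w u v / (3 * (1 + ε)) ≤ wWalk w γ ∧
        gdist G w u x + (wWalk w γ : EReal) + gdist G w y v ≤ (((1 + ε) * w u v : ℝ) : EReal)) :
    ∀ s t : V,
      gdist (SimpleGraph.fromEdgeSet (Fnew ∪ (H.edgeSet \ Fold))) w s t
        ≤ ((1 + 11 * δ : ℝ) : EReal) * gdist G w s t :=
  statement5_general G w hint ε δ hε0 hεδ hδ H hH Fold Fnew hrepl

end Paper
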